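/- For every integer d ≥ 2, the sequence Σ_d := 2^{-2d-1} ∑_{k=1}^{d} 4^k binom(2(d-k), d-k) satisfies 1/2 + (1/2)Σ_{d-1} ≤ Σ_d < 1/2 + Σ_{d-1}. -/

import Mathlib

/-!
Reindexing by `j = d - k`, the numerator of `Σ_d` is `∑_{j<d} 4^(d-j) C(2j,j) = 2 d C(2d,d)`,
so `Σ_d = d a_d` with `a_d = C(2d,d)/4^d`. The recurrence `(n+1) C(2n+2,n+1) = 2(2n+1) C(2n,n)`
then gives `Σ_{n+1} = Σ_n + a_n/2`, and the two bounds become `a_n < 1` and `1 ≤ (n+1) a_n`.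
-/

/-- Marginal variance of node `d` in the path model with `ζ = γ = 1`. -/
noncomputable def pathVar (d : ℕ) : ℝ :=
  (∑ k ∈ Finset.Icc 1 d, (4 : ℝ) ^ k * ((2 * (d - k)).choose (d - k) : ℝ)) / 2 ^ (2 * d + 1)

namespace Nat

theorem sum_range_four_pow_mul_centralBinom (n : ℕ) :
    ∑ i ∈ Finset.range n, 4 ^ (n - i) * centralBinom i = 2 * n * centralBinom n := by
  induction n with
  | zero => simp
  | succ n ih =>
    have shift : ∑ i ∈ Finset.range n, 4 ^ (n + 1 - i) * centralBinom i
        = 4 * ∑ i ∈ Finset.range n, 4 ^ (n - i) * centralBinom i := by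
      rw [Finset.mul_sum]
      refine Finset.sum_congr rfl fun i hi => ?_
      rw [Nat.sub_add_comm (Finset.mem_range.1 hi).le, pow_succ]
      ring
    rw [Finset.sum_range_succ, shift, ih, Nat.add_sub_cancel_left, pow_one]
    linarith [succ_mul_centralBinom_succ n]

theorem sum_Icc_four_pow_mul_centralBinom_sub (n : ℕ) :
    ∑ k ∈ Finset.Icc 1 n, 4 ^ k * centralBinom (n - k) = 2 * n * centralBinom n := by
  rw [← sum_range_four_pow_mul_centralBinom]
  refine Finset.sum_nbij' (n - ·) (n - ·) ?_ ?_ ?_ ?_ ?_ <;> intro x hx <;>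
    simp only [Finset.mem_Icc, Finset.mem_range] at hx ⊢ <;>
    first | omega | rw [Nat.sub_sub_self hx.2]

theorem four_pow_le_succ_mul_centralBinom (n : ℕ) : 4 ^ n ≤ (n + 1) * centralBinom n := by
  induction n with
  | zero => simp
  | succ n ih =>
    refine Nat.le_of_mul_le_mul_left ?_ n.succ_pos
    calc (n + 1) * 4 ^ (n + 1) = 4 * (n + 1) * 4 ^ n := by ring
      _ ≤ 4 * (n + 1) * ((n + 1) * centralBinom n) := Nat.mul_le_mul_left _ ih
      _ ≤ (n + 2) * (2 * (2 * n + 1) * centralBinom n) := by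
        nlinarith [centralBinom_pos n]
      _ = (n + 1) * ((n + 1 + 1) * centralBinom (n + 1)) := by
        rw [← succ_mul_centralBinom_succ]; ring

end Nat

theorem pathVar_eq (d : ℕ) : pathVar d = d * d.centralBinom / 4 ^ d := by
  have numerator : ∑ k ∈ Finset.Icc 1 d, (4 : ℝ) ^ k * ((2 * (d - k)).choose (d - k) : ℝ)
      = 2 * d * d.centralBinom := by
    exact_mod_cast Nat.sum_Icc_four_pow_mul_centralBinom_sub d
  rw [pathVar, numerator, pow_succ, pow_mul]
  field_simp
  norm_num

theorem pathVar_succ (n : ℕ) :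
    pathVar (n + 1) = pathVar n + n.centralBinom / 4 ^ n / 2 := by
  have recurrence :
      ((n + 1 : ℕ) : ℝ) * (n + 1).centralBinom = 2 * (2 * n + 1) * n.centralBinom := by
    exact_mod_cast Nat.succ_mul_centralBinom_succ n
  rw [pathVar_eq, pathVar_eq, recurrence, pow_succ]
  field_simp
  ring

/-- `1/2 + Σ_{d-1}/2 ≤ Σ_d < 1/2 + Σ_{d-1}`. -/
theorem pathVar_bounds (d : ℕ) (hd : 2 ≤ d) :
    1 / 2 + 1 / 2 * pathVar (d - 1) ≤ pathVar d ∧ pathVar d < 1 / 2 + pathVar (d - 1) := by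
  obtain ⟨n, rfl⟩ : ∃ n, d = n + 1 := ⟨d - 1, by omega⟩
  set a : ℝ := n.centralBinom / 4 ^ n with ha
  have hpow : (0 : ℝ) < 4 ^ n := by positivity
  have a_lt_one : a < 1 := by
    rw [ha, div_lt_one hpow]
    exact_mod_cast Nat.centralBinom_lt_four_pow (by omega : n ≠ 0)
  have one_le_succ_mul_a : 1 ≤ (n + 1) * a := by
    rw [ha, mul_div_assoc', one_le_div hpow]
    exact_mod_cast Nat.four_pow_le_succ_mul_centralBinom n
  have pathVar_eq_mul : pathVar n = n * a := by rw [pathVar_eq, ha, mul_div_assoc]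
  rw [Nat.add_sub_cancel, pathVar_succ, pathVar_eq_mul]
  constructor <;> linarith
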